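/- Let X be a measurable space, let μ and ν be probability measures on X, and let m = (1/2)•(μ + ν). The supremum, over all measurable functions D : X → ℝ with 0 < D(x) < 1 for all x and with log ∘ D integrable with respect to μ and log ∘ (1−D) integrable with respect to ν, of ∫ log(D) dμ + ∫ log(1 − D) dν, equals KL(μ ‖ m) + KL(ν ‖ m) − log 4. Consequently this supremum is at least −log 4, with equality if and only if μ = ν. -/

import Mathlib

open MeasureTheory
open scoped ENNReal

/-- Kullback–Leibler divergence of `μ` with respect to `m`, as the integral of the
logarithm of the Radon–Nikodym derivative (valid whenever `μ ≪ m`). -/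
noncomputable def klDiv {X : Type*} [MeasurableSpace X] (μ m : Measure X) : ℝ :=
  ∫ x, Real.log ((μ.rnDeriv m) x).toReal ∂μ

/-!
With `f = dμ/dm` and `g = dν/dm` we have `f + g = 2` `m`-a.e., and the objective becomes
`∫ (f log D + g log (1 - D)) dm`. Gibbs' inequality `a log s ≤ a log a + s - a` bounds the
integrand pointwise by `f log f + g log g - log 4`, with equality at `D = f / 2 = dμ/d(μ + ν)`;
integrating gives `KL(μ ‖ m) + KL(ν ‖ m) - log 4`. The optimal `D` may take the values `0` and `1`,
so it is approached by the admissible `(1 - ε) D + ε / 2`, which loses at most `2 log (1 - ε)`.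
Each divergence is nonnegative and vanishes only when its measure is `m`; for both, that means
`μ = ν`.
-/

open Real Set Filter Topology

lemma mul_log_le_mul_log_add_sub {c s : ℝ} (hc : 0 ≤ c) (hs : 0 < s) :
    c * log s ≤ c * log c + (s - c) := by
  rcases hc.eq_or_lt with rfl | hc
  · simpa using hs.le
  have h := log_le_sub_one_of_pos (div_pos hs hc)
  rw [log_div hs.ne' hc.ne'] at h
  calc c * log s = c * log c + c * (log s - log c) := by ring
    _ ≤ c * log c + c * (s / c - 1) := by gcongr
    _ = c * log c + (s - c) := by field_simp

lemma mul_log_add_mul_log_one_sub_le {a b t : ℝ} (ha : 0 ≤ a) (hb : 0 ≤ b) (hab : a + b = 2)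
    (ht : t ∈ Ioo 0 1) :
    a * log t + b * log (1 - t) ≤ a * log a + b * log b - log 4 := by
  have h₁ := mul_log_le_mul_log_add_sub ha (by linarith [ht.1] : 0 < 2 * t)
  have h₂ := mul_log_le_mul_log_add_sub hb (by linarith [ht.2] : 0 < 2 * (1 - t))
  rw [log_mul two_ne_zero ht.1.ne'] at h₁
  rw [log_mul two_ne_zero (sub_pos.2 ht.2).ne'] at h₂
  have h₄ : log 4 = (a + b) * log 2 := by
    rw [hab, show (4 : ℝ) = 2 ^ 2 by norm_num, log_pow, Nat.cast_ofNat]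
  linear_combination h₁ + h₂ + h₄ - hab

lemma log_one_sub_add_log_le_log_mix {ε t : ℝ} (hε : ε ∈ Ioo 0 1) (ht : 0 < t) :
    log (1 - ε) + log t ≤ log ((1 - ε) * t + ε / 2) := by
  have hε₁ : 0 < 1 - ε := sub_pos.2 hε.2
  rw [← log_mul hε₁.ne' ht.ne']
  exact log_le_log (by positivity) (by linarith [hε.1])

lemma log_mix_mem_Icc {ε t : ℝ} (hε : ε ∈ Ioo 0 1) (ht : t ∈ Icc 0 1) :
    log ((1 - ε) * t + ε / 2) ∈ Icc (log (ε / 2)) 0 := by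
  have hε₁ : 0 < 1 - ε := sub_pos.2 hε.2
  have h₀ : 0 ≤ (1 - ε) * t := mul_nonneg hε₁.le ht.1
  have h₁ : (1 - ε) * t ≤ 1 - ε := mul_le_of_le_one_right hε₁.le ht.2
  exact ⟨log_le_log (by linarith [hε.1]) (by linarith),
    log_nonpos (by linarith [hε.1]) (by linarith [hε.1])⟩

section Divergence

variable {X : Type*} [MeasurableSpace X] {μ m : Measure X}

lemma klDiv_eq_integral_llr : klDiv μ m = ∫ x, llr μ m x ∂μ := rfl

lemma integrable_llr_of_toReal_rnDeriv_le [IsFiniteMeasure μ] [IsFiniteMeasure m] (hμm : μ ≪ m)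
    {c : ℝ} (hc : ∀ᵐ x ∂m, (μ.rnDeriv m x).toReal ≤ c) : Integrable (llr μ m) μ := by
  rw [← integrable_rnDeriv_mul_log_iff hμm]
  obtain ⟨C, hC⟩ :=
    (isCompact_Icc (a := 0) (b := c)).exists_bound_of_continuousOn continuous_mul_log.continuousOn
  have hmeas := continuous_mul_log.measurable.comp (μ.measurable_rnDeriv m).ennreal_toReal
  refine Integrable.of_bound hmeas.aestronglyMeasurable C ?_
  filter_upwards [hc] with x hx using hC _ ⟨ENNReal.toReal_nonneg, hx⟩

lemma klDiv_eq_toReal_klDiv [IsFiniteMeasure μ] [IsFiniteMeasure m] (hμm : μ ≪ m)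
    (h : μ univ = m univ) : klDiv μ m = (InformationTheory.klDiv μ m).toReal :=
  (InformationTheory.toReal_klDiv_of_measure_eq hμm h).symm

lemma klDiv_nonneg [IsFiniteMeasure μ] [IsFiniteMeasure m] (hμm : μ ≪ m) (h : μ univ = m univ) :
    0 ≤ klDiv μ m :=
  klDiv_eq_toReal_klDiv hμm h ▸ ENNReal.toReal_nonneg

lemma klDiv_eq_zero_iff [IsFiniteMeasure μ] [IsFiniteMeasure m] (hμm : μ ≪ m)
    (h : μ univ = m univ) (hint : Integrable (llr μ m) μ) : klDiv μ m = 0 ↔ μ = m := by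
  rw [klDiv_eq_toReal_klDiv hμm h, ENNReal.toReal_eq_zero_iff,
    or_iff_left (InformationTheory.klDiv_ne_top hμm hint), InformationTheory.klDiv_eq_zero_iff]

end Divergence

section Midpoint

variable {X : Type*} [MeasurableSpace X] {μ ν m : Measure X}

lemma absolutelyContinuous_of_add_eq_two_smul (h : μ + ν = (2 : ℝ≥0∞) • m) : μ ≪ m := by
  have hμ : μ ≪ μ + ν := Measure.AbsolutelyContinuous.rfl.add_right ν
  rw [h] at hμ
  exact hμ.trans Measure.smul_absolutelyContinuous

lemma isProbabilityMeasure_of_add_eq_two_smul [IsProbabilityMeasure μ] [IsProbabilityMeasure ν]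
    (h : μ + ν = (2 : ℝ≥0∞) • m) : IsProbabilityMeasure m := by
  constructor
  have h2 := congrArg (fun ρ : Measure X ↦ ρ univ) h
  simp only [Measure.add_apply, measure_univ, Measure.smul_apply, smul_eq_mul] at h2
  refine (ENNReal.mul_right_inj two_ne_zero ENNReal.ofNat_ne_top).1 ?_
  rw [← h2, mul_one, one_add_one_eq_two]

lemma toReal_rnDeriv_add_toReal_rnDeriv_eq_two [IsFiniteMeasure μ] [IsFiniteMeasure ν]
    [IsFiniteMeasure m] (h : μ + ν = (2 : ℝ≥0∞) • m) :
    ∀ᵐ x ∂m, (μ.rnDeriv m x).toReal + (ν.rnDeriv m x).toReal = 2 := by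
  have hsum : μ.rnDeriv m + ν.rnDeriv m =ᵐ[m] fun _ ↦ 2 := by
    refine (Measure.rnDeriv_add μ ν m).symm.trans ?_
    rw [h]
    filter_upwards [Measure.rnDeriv_smul_left_of_ne_top m m (r := 2) (by simp),
      Measure.rnDeriv_self m] with x h₁ h₂
    simp [h₁, h₂]
  filter_upwards [hsum, μ.rnDeriv_lt_top m, ν.rnDeriv_lt_top m] with x hx hμx hνx
  rw [← ENNReal.toReal_add hμx.ne hνx.ne]
  simpa using congrArg ENNReal.toReal hx

lemma integrable_llr_of_add_eq_two_smul [IsFiniteMeasure μ] [IsFiniteMeasure ν] [IsFiniteMeasure m]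
    (h : μ + ν = (2 : ℝ≥0∞) • m) : Integrable (llr μ m) μ :=
  integrable_llr_of_toReal_rnDeriv_le (absolutelyContinuous_of_add_eq_two_smul h) (c := 2) <| by
    filter_upwards [toReal_rnDeriv_add_toReal_rnDeriv_eq_two h] with x hx
    linarith [(ν.rnDeriv m x).toReal_nonneg]

lemma integral_log_add_integral_log_one_sub_le [IsProbabilityMeasure μ] [IsProbabilityMeasure ν]
    (h : μ + ν = (2 : ℝ≥0∞) • m) {D : X → ℝ} (hD : ∀ x, D x ∈ Ioo 0 1)
    (hμD : Integrable (fun x ↦ log (D x)) μ) (hνD : Integrable (fun x ↦ log (1 - D x)) ν) :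
    ∫ x, log (D x) ∂μ + ∫ x, log (1 - D x) ∂ν ≤ klDiv μ m + klDiv ν m - log 4 := by
  have := isProbabilityMeasure_of_add_eq_two_smul h
  have hμm := absolutelyContinuous_of_add_eq_two_smul h
  have hνm := absolutelyContinuous_of_add_eq_two_smul ((add_comm ν μ).trans h)
  have hμlog := (integrable_rnDeriv_mul_log_iff hμm).2 (integrable_llr_of_add_eq_two_smul h)
  have hνlog := (integrable_rnDeriv_mul_log_iff hνm).2
    (integrable_llr_of_add_eq_two_smul ((add_comm ν μ).trans h))
  have hμD' := (integrable_rnDeriv_smul_iff hμm).2 hμD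
  have hνD' := (integrable_rnDeriv_smul_iff hνm).2 hνD
  simp only [smul_eq_mul] at hμD' hνD'
  have hlog : Integrable (fun x ↦ (μ.rnDeriv m x).toReal * log (μ.rnDeriv m x).toReal +
      (ν.rnDeriv m x).toReal * log (ν.rnDeriv m x).toReal) m := hμlog.add hνlog
  calc ∫ x, log (D x) ∂μ + ∫ x, log (1 - D x) ∂ν
      = ∫ x, ((μ.rnDeriv m x).toReal * log (D x) +
          (ν.rnDeriv m x).toReal * log (1 - D x)) ∂m := by
        rw [integral_add hμD' hνD', ← integral_rnDeriv_smul hμm, ← integral_rnDeriv_smul hνm]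
        rfl
    _ ≤ ∫ x, ((μ.rnDeriv m x).toReal * log (μ.rnDeriv m x).toReal +
          (ν.rnDeriv m x).toReal * log (ν.rnDeriv m x).toReal - log 4) ∂m := by
        refine integral_mono_ae (hμD'.add hνD') (hlog.sub (integrable_const _)) ?_
        filter_upwards [toReal_rnDeriv_add_toReal_rnDeriv_eq_two h] with x hx
        exact mul_log_add_mul_log_one_sub_le ENNReal.toReal_nonneg ENNReal.toReal_nonneg hx (hD x)
    _ = klDiv μ m + klDiv ν m - log 4 := by
        rw [integral_sub hlog (integrable_const _), integral_add hμlog hνlog,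
          integral_rnDeriv_mul_log hμm, integral_rnDeriv_mul_log hνm, integral_const]
        simp [klDiv_eq_integral_llr]

end Midpoint

section Mixing

variable {X : Type*} [MeasurableSpace X] {μ ν : Measure X} {D : X → ℝ} {ε : ℝ}

def discriminatorValues (μ ν : Measure X) : Set ℝ :=
  {r | ∃ D : X → ℝ, Measurable D ∧ (∀ x, D x ∈ Ioo 0 1) ∧
    Integrable (fun x ↦ log (D x)) μ ∧ Integrable (fun x ↦ log (1 - D x)) ν ∧
    r = ∫ x, log (D x) ∂μ + ∫ x, log (1 - D x) ∂ν}

lemma discriminatorValues_nonempty [IsFiniteMeasure μ] [IsFiniteMeasure ν] :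
    (discriminatorValues μ ν).Nonempty :=
  ⟨_, fun _ ↦ 1 / 2, measurable_const, fun _ ↦ by norm_num, integrable_const _,
    integrable_const _, rfl⟩

lemma integrable_log_mix [IsFiniteMeasure μ] (hDm : Measurable D) (hD : ∀ x, D x ∈ Icc 0 1)
    (hε : ε ∈ Ioo 0 1) : Integrable (fun x ↦ log ((1 - ε) * D x + ε / 2)) μ :=
  .of_mem_Icc _ _ (((hDm.const_mul _).add_const _).log.aemeasurable)
    (ae_of_all _ fun x ↦ log_mix_mem_Icc hε (hD x))

lemma integral_log_add_le_integral_log_mix [IsFiniteMeasure μ] (hDm : Measurable D)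
    (hD : ∀ x, D x ∈ Icc 0 1) (hD₀ : ∀ᵐ x ∂μ, 0 < D x)
    (hμD : Integrable (fun x ↦ log (D x)) μ) (hε : ε ∈ Ioo 0 1) :
    ∫ x, log (D x) ∂μ + μ.real univ * log (1 - ε) ≤ ∫ x, log ((1 - ε) * D x + ε / 2) ∂μ := by
  calc ∫ x, log (D x) ∂μ + μ.real univ * log (1 - ε)
      = ∫ x, (log (1 - ε) + log (D x)) ∂μ := by
        rw [integral_add (integrable_const _) hμD, integral_const, smul_eq_mul]; ring
    _ ≤ ∫ x, log ((1 - ε) * D x + ε / 2) ∂μ :=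
        integral_mono_ae ((integrable_const _).add hμD) (integrable_log_mix hDm hD hε)
          (by filter_upwards [hD₀] with x hx using log_one_sub_add_log_le_log_mix hε hx)

lemma add_mul_log_one_sub_le_sSup_discriminatorValues [IsFiniteMeasure μ] [IsFiniteMeasure ν]
    (hbdd : BddAbove (discriminatorValues μ ν)) (hDm : Measurable D) (hD : ∀ x, D x ∈ Icc 0 1)
    (hμD₀ : ∀ᵐ x ∂μ, 0 < D x) (hνD₁ : ∀ᵐ x ∂ν, D x < 1)
    (hμD : Integrable (fun x ↦ log (D x)) μ) (hνD : Integrable (fun x ↦ log (1 - D x)) ν)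
    (hε : ε ∈ Ioo 0 1) :
    ∫ x, log (D x) ∂μ + ∫ x, log (1 - D x) ∂ν + (μ.real univ + ν.real univ) * log (1 - ε) ≤
      sSup (discriminatorValues μ ν) := by
  have h₁D : ∀ x, 1 - ((1 - ε) * D x + ε / 2) = (1 - ε) * (1 - D x) + ε / 2 := fun x ↦ by ring
  have hD' : ∀ x, 1 - D x ∈ Icc 0 1 := fun x ↦ ⟨by linarith [(hD x).2], by linarith [(hD x).1]⟩
  have hmix : ∀ x, (1 - ε) * D x + ε / 2 ∈ Ioo 0 1 := fun x ↦ by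
    have hε₁ : 0 < 1 - ε := sub_pos.2 hε.2
    have h₀ := mul_nonneg hε₁.le (hD x).1
    have h₁ := mul_nonneg hε₁.le (hD' x).1
    constructor <;> nlinarith [hε.1, h₁D x]
  have hmixν : (fun x ↦ log (1 - ((1 - ε) * D x + ε / 2))) =
      fun x ↦ log ((1 - ε) * (1 - D x) + ε / 2) := funext fun x ↦ congrArg log (h₁D x)
  have hμ := integral_log_add_le_integral_log_mix hDm hD hμD₀ hμD hε
  have hν := integral_log_add_le_integral_log_mix (D := fun x ↦ 1 - D x)
    (measurable_const.sub hDm) hD'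
    (by filter_upwards [hνD₁] with x hx using sub_pos.2 hx) hνD hε
  refine le_csSup_of_le hbdd ⟨_, (hDm.const_mul _).add_const _, hmix,
    integrable_log_mix hDm hD hε, ?_, rfl⟩ ?_
  · rw [hmixν]
    exact integrable_log_mix (measurable_const.sub hDm) hD' hε
  · rw [hmixν]
    linarith

lemma le_sSup_discriminatorValues [IsFiniteMeasure μ] [IsFiniteMeasure ν]
    (hbdd : BddAbove (discriminatorValues μ ν)) (hDm : Measurable D) (hD : ∀ x, D x ∈ Icc 0 1)
    (hμD₀ : ∀ᵐ x ∂μ, 0 < D x) (hνD₁ : ∀ᵐ x ∂ν, D x < 1)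
    (hμD : Integrable (fun x ↦ log (D x)) μ) (hνD : Integrable (fun x ↦ log (1 - D x)) ν) :
    ∫ x, log (D x) ∂μ + ∫ x, log (1 - D x) ∂ν ≤ sSup (discriminatorValues μ ν) := by
  have hlog : ContinuousAt (fun ε : ℝ ↦ log (1 - ε)) 0 :=
    (continuousAt_const.sub continuousAt_id).log (by norm_num)
  have hlim := (hlog.tendsto.const_mul (μ.real univ + ν.real univ)).const_add
    (∫ x, log (D x) ∂μ + ∫ x, log (1 - D x) ∂ν)
  simp only [sub_zero, log_one, mul_zero, add_zero] at hlim
  refine le_of_tendsto (hlim.mono_left (nhdsWithin_le_nhds (s := Ioi 0))) ?_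
  filter_upwards [Ioo_mem_nhdsGT one_pos] with ε hε
  exact add_mul_log_one_sub_le_sSup_discriminatorValues hbdd hDm hD hμD₀ hνD₁ hμD hνD hε

end Mixing

section Optimal

variable {X : Type*} [MeasurableSpace X] {μ ν m : Measure X}

/-- `dμ / d(μ + ν)`, written through densities with respect to `m` so that it takes values in
`[0, 1]` everywhere and not only almost everywhere. -/
noncomputable def optimalDiscriminator (μ ν m : Measure X) (x : X) : ℝ :=
  (μ.rnDeriv m x).toReal / ((μ.rnDeriv m x).toReal + (ν.rnDeriv m x).toReal)

lemma measurable_optimalDiscriminator : Measurable (optimalDiscriminator μ ν m) :=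
  (μ.measurable_rnDeriv m).ennreal_toReal.div
    ((μ.measurable_rnDeriv m).ennreal_toReal.add (ν.measurable_rnDeriv m).ennreal_toReal)

lemma optimalDiscriminator_mem_Icc (x : X) : optimalDiscriminator μ ν m x ∈ Icc 0 1 := by
  have hμ := (μ.rnDeriv m x).toReal_nonneg
  have hν := (ν.rnDeriv m x).toReal_nonneg
  exact ⟨div_nonneg hμ (add_nonneg hμ hν),
    div_le_one_of_le₀ (le_add_of_nonneg_right hν) (add_nonneg hμ hν)⟩

variable [IsFiniteMeasure μ] [IsFiniteMeasure ν] [IsFiniteMeasure m]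

lemma one_sub_optimalDiscriminator_ae_eq (h : μ + ν = (2 : ℝ≥0∞) • m) :
    ∀ᵐ x ∂m, 1 - optimalDiscriminator μ ν m x = optimalDiscriminator ν μ m x := by
  filter_upwards [toReal_rnDeriv_add_toReal_rnDeriv_eq_two h] with x hx
  rw [optimalDiscriminator, optimalDiscriminator, add_comm (ν.rnDeriv m x).toReal, hx]
  linarith

lemma optimalDiscriminator_ae_eq_half (h : μ + ν = (2 : ℝ≥0∞) • m) :
    ∀ᵐ x ∂m, optimalDiscriminator μ ν m x = (μ.rnDeriv m x).toReal / 2 := by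
  filter_upwards [toReal_rnDeriv_add_toReal_rnDeriv_eq_two h] with x hx
  rw [optimalDiscriminator, hx]

lemma optimalDiscriminator_pos_and_log_eq (h : μ + ν = (2 : ℝ≥0∞) • m) :
    ∀ᵐ x ∂μ, 0 < optimalDiscriminator μ ν m x ∧
      log (optimalDiscriminator μ ν m x) = llr μ m x - log 2 := by
  have hμm := absolutelyContinuous_of_add_eq_two_smul h
  filter_upwards [hμm.ae_le (optimalDiscriminator_ae_eq_half h), Measure.rnDeriv_pos hμm,
    hμm.ae_le (μ.rnDeriv_lt_top m)] with x hx hpos hfin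
  have hpos' := ENNReal.toReal_pos hpos.ne' hfin.ne
  rw [hx, log_div hpos'.ne' two_ne_zero, llr]
  exact ⟨by positivity, rfl⟩

end Optimal

section Main

variable {X : Type*} [MeasurableSpace X] {μ ν m : Measure X}
  [IsProbabilityMeasure μ] [IsProbabilityMeasure ν]

theorem sSup_discriminatorValues_eq (h : μ + ν = (2 : ℝ≥0∞) • m) :
    sSup (discriminatorValues μ ν) = klDiv μ m + klDiv ν m - log 4 := by
  have := isProbabilityMeasure_of_add_eq_two_smul h
  have h' : ν + μ = (2 : ℝ≥0∞) • m := (add_comm ν μ).trans h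
  have hle : ∀ r ∈ discriminatorValues μ ν, r ≤ klDiv μ m + klDiv ν m - log 4 := by
    rintro _ ⟨D, -, hD, hμD, hνD, rfl⟩
    exact integral_log_add_integral_log_one_sub_le h hD hμD hνD
  refine le_antisymm (csSup_le discriminatorValues_nonempty hle) ?_
  have hμ := optimalDiscriminator_pos_and_log_eq h
  have hν : ∀ᵐ x ∂ν, 0 < 1 - optimalDiscriminator μ ν m x ∧
      log (1 - optimalDiscriminator μ ν m x) = llr ν m x - log 2 := by
    filter_upwards [(absolutelyContinuous_of_add_eq_two_smul h').ae_le
      (one_sub_optimalDiscriminator_ae_eq h), optimalDiscriminator_pos_and_log_eq h']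
      with x hx hνx
    rwa [hx]
  have hμlog : (fun x ↦ log (optimalDiscriminator μ ν m x)) =ᵐ[μ] fun x ↦ llr μ m x - log 2 := by
    filter_upwards [hμ] with x hx using hx.2
  have hνlog : (fun x ↦ log (1 - optimalDiscriminator μ ν m x)) =ᵐ[ν]
      fun x ↦ llr ν m x - log 2 := by
    filter_upwards [hν] with x hx using hx.2
  have hμllr := integrable_llr_of_add_eq_two_smul h
  have hνllr := integrable_llr_of_add_eq_two_smul h'
  have hlog4 : log 4 = 2 * log 2 := by
    rw [show (4 : ℝ) = 2 ^ 2 by norm_num, log_pow, Nat.cast_ofNat]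
  calc klDiv μ m + klDiv ν m - log 4
      = ∫ x, log (optimalDiscriminator μ ν m x) ∂μ +
          ∫ x, log (1 - optimalDiscriminator μ ν m x) ∂ν := by
        rw [integral_congr_ae hμlog, integral_congr_ae hνlog,
          integral_sub hμllr (integrable_const _), integral_sub hνllr (integrable_const _), hlog4]
        simp only [integral_const, probReal_univ, one_smul, ← klDiv_eq_integral_llr]
        ring
    _ ≤ sSup (discriminatorValues μ ν) :=
        le_sSup_discriminatorValues ⟨_, hle⟩ measurable_optimalDiscriminator
          optimalDiscriminator_mem_Icc (hμ.mono fun x hx ↦ hx.1)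
          (hν.mono fun x hx ↦ sub_pos.1 hx.1) ((hμllr.sub (integrable_const _)).congr hμlog.symm)
          ((hνllr.sub (integrable_const _)).congr hνlog.symm)

lemma klDiv_nonneg_of_add_eq_two_smul (h : μ + ν = (2 : ℝ≥0∞) • m) : 0 ≤ klDiv μ m := by
  have := isProbabilityMeasure_of_add_eq_two_smul h
  exact klDiv_nonneg (absolutelyContinuous_of_add_eq_two_smul h) (by simp)

lemma klDiv_add_klDiv_eq_zero_iff (h : μ + ν = (2 : ℝ≥0∞) • m) :
    klDiv μ m + klDiv ν m = 0 ↔ μ = ν := by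
  have := isProbabilityMeasure_of_add_eq_two_smul h
  have h' : ν + μ = (2 : ℝ≥0∞) • m := (add_comm ν μ).trans h
  rw [add_eq_zero_iff_of_nonneg (klDiv_nonneg_of_add_eq_two_smul h)
      (klDiv_nonneg_of_add_eq_two_smul h'),
    klDiv_eq_zero_iff (absolutelyContinuous_of_add_eq_two_smul h) (by simp)
      (integrable_llr_of_add_eq_two_smul h),
    klDiv_eq_zero_iff (absolutelyContinuous_of_add_eq_two_smul h') (by simp)
      (integrable_llr_of_add_eq_two_smul h')]
  refine ⟨fun ⟨hμ, hν⟩ ↦ hμ.trans hν.symm, ?_⟩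
  rintro rfl
  suffices μ = m from ⟨this, this⟩
  ext s -
  have hs := congrArg (fun ρ : Measure X ↦ ρ s) h
  simp only [Measure.add_apply, Measure.smul_apply, smul_eq_mul, ← two_mul] at hs
  exact (ENNReal.mul_right_inj two_ne_zero ENNReal.ofNat_ne_top).1 hs

end Main

/-- The supremum of the GAN adversarial objective over all admissible discriminators
`D : X → (0,1)` equals `KL(μ ‖ m) + KL(ν ‖ m) − log 4` with `m = (1/2) • (μ + ν)`
(i.e. `2·JS(μ ‖ ν) − log 4`); consequently it is at least `−log 4`, with equality
if and only if `μ = ν`. -/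
theorem iSup_adversarial_objective_eq_klDiv_midpoint {X : Type*} [MeasurableSpace X]
    (μ ν : Measure X) [IsProbabilityMeasure μ] [IsProbabilityMeasure ν]
    (m : Measure X) (hm : m = (1/2 : ℝ≥0∞) • (μ + ν)) :
    sSup {r : ℝ | ∃ D : X → ℝ, Measurable D ∧ (∀ x, D x ∈ Set.Ioo (0 : ℝ) 1) ∧
        Integrable (fun x => Real.log (D x)) μ ∧
        Integrable (fun x => Real.log (1 - D x)) ν ∧
        r = (∫ x, Real.log (D x) ∂μ) + (∫ x, Real.log (1 - D x) ∂ν)} =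
      klDiv μ m + klDiv ν m - Real.log 4 ∧
    -Real.log 4 ≤ klDiv μ m + klDiv ν m - Real.log 4 ∧
    (klDiv μ m + klDiv ν m - Real.log 4 = -Real.log 4 ↔ μ = ν) := by
  have h : μ + ν = (2 : ℝ≥0∞) • m := by
    rw [hm, smul_smul, ENNReal.mul_div_cancel two_ne_zero ENNReal.ofNat_ne_top, one_smul]
  have hμ := klDiv_nonneg_of_add_eq_two_smul h
  have hν := klDiv_nonneg_of_add_eq_two_smul ((add_comm ν μ).trans h)
  refine ⟨sSup_discriminatorValues_eq h, by linarith, ?_⟩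
  rw [← klDiv_add_klDiv_eq_zero_iff h]
  constructor <;> intro <;> linarith
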